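/- Let d, p and α be positive integers with 1 ≤ d ≤ p+1, fix parameters r_0 = 1, r_1, …, r_{p+1} with r_{e−1} dividing r_e for each e, and let α′ be the largest multiple of r_d that is strictly less than α. Define γ_d on {0,1}^α × {0,1}^α by γ_d(v,w) = (c_p(v′,w′), η_{d−1}(v″,w″)), where v = (v′,v″) and w = (w′,w″) with v′,w′ ∈ {0,1}^{α′} and v″,w″ ∈ {0,1}^{α−α′}. Then c_p, as a function on {0,1}^α × {0,1}^α, refines γ_d. -/

import Mathlib

/-!
Coloring machinery of Conlon–Fox–Lee–Sudakov. Vectors in `{0,1}^α` are modelled as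
`Bool` lists of length `α`. Fix block lengths `r 0 = 1, r 1, …` with `r d ∣ r (d+1)`.
-/

/-- The blocks of resolution with block length `r`: split a vector into consecutive
blocks of length `r` (the last block may be shorter). -/
def blocksOf (r : ℕ) (v : List Bool) : List (List Bool) := v.toChunks r

/-- The function `η_d` (with `r = r_d`): records the position `i` of the first pair of
differing blocks of resolution `d` together with the unordered pair `{v_i, w_i}` of
these blocks; it takes the value `none` (playing the role of `0`) when `v = w`. -/
def eta (r : ℕ) (v w : List Bool) : Option (ℕ × Sym2 (List Bool)) :=
  ((((blocksOf r v).zip (blocksOf r w)).zipIdx.map Prod.swap).find? (fun q => q.2.1 != q.2.2)).map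
    (fun q => (q.1, s(q.2.1, q.2.2)))

/-- The function `ξ_d`: apply `η_d` to each corresponding pair of blocks of
resolution `d+1`. -/
def xi (r : ℕ → ℕ) (d : ℕ) (v w : List Bool) : List (Option (ℕ × Sym2 (List Bool))) :=
  ((blocksOf (r (d+1)) v).zip (blocksOf (r (d+1)) w)).map fun q => eta (r d) q.1 q.2

/-- The type of colors used by the coloring `c_p`. -/
abbrev EGColor := List (List (Option (ℕ × Sym2 (List Bool))))

instance : DecidableEq (List (Option (ℕ × Sym2 (List Bool)))) := instDecidableEqList
instance : DecidableEq EGColor := instDecidableEqList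

/-- The coloring `c_p (v,w) = (ξ_p(v,w), ξ_{p-1}(v,w), …, ξ_0(v,w))`. -/
def cColor (r : ℕ → ℕ) (p : ℕ) (v w : List Bool) : EGColor :=
  (List.range (p+1)).map fun j => xi r (p - j) v w

/-- The set of colors appearing under `c_p` on (unordered) pairs of distinct
elements of `S`. -/
def colorsOn (r : ℕ → ℕ) (p : ℕ) (S : Finset (List Bool)) : Finset EGColor :=
  ((S ×ˢ S).filter fun q => q.1 ≠ q.2).image fun q => cColor r p q.1 q.2

/-- The vertex set `{0,1}^α`, realized as the set of all `Bool` lists of length `α`. -/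
def allVecs (α : ℕ) : Finset (List Bool) :=
  Finset.univ.image fun v : Fin α → Bool => List.ofFn v

/-- `alphaD rd α`: the largest multiple of `rd` that is strictly less than `α`
(for `α, rd ≥ 1`). -/
def alphaD (rd α : ℕ) : ℕ := rd * ((α - 1) / rd)

/-- The set `C_E^{(d)}` of emerging colors of `S` at resolution `d`: the unordered pairs
`{v'', w''}` of final segments of elements `v = (v', v'')`, `w = (w', w'')` of `S`
(split at `α_d`) with `v' = w'` and `v'' ≠ w''`. -/
def CEset (r : ℕ → ℕ) (α : ℕ) (S : Finset (List Bool)) (d : ℕ) : Finset (Sym2 (List Bool)) :=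
  ((S ×ˢ S).filter fun q =>
      q.1.take (alphaD (r d) α) = q.2.take (alphaD (r d) α) ∧
      q.1.drop (alphaD (r d) α) ≠ q.2.drop (alphaD (r d) α)).image
    fun q => s(q.1.drop (alphaD (r d) α), q.2.drop (alphaD (r d) α))

/-- The set `C_I^{(d)}` of inherited colors of `S` at resolution `d`: the pairs
`(c_p(v', w'), η_{d-1}(v'', w''))` over elements `v = (v', v'')`, `w = (w', w'')` of `S`
(split at `α_d`) with `v' ≠ w'`. -/
def CIset (r : ℕ → ℕ) (p α : ℕ) (S : Finset (List Bool)) (d : ℕ) :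
    Finset (EGColor × Option (ℕ × Sym2 (List Bool))) :=
  ((S ×ˢ S).filter fun q =>
      q.1.take (alphaD (r d) α) ≠ q.2.take (alphaD (r d) α)).image
    fun q => (cColor r p (q.1.take (alphaD (r d) α)) (q.2.take (alphaD (r d) α)),
              eta (r (d-1)) (q.1.drop (alphaD (r d) α)) (q.2.drop (alphaD (r d) α)))


/-!
Truncating `v` and `w` to their first `k` letters truncates each block, and `η` of truncated
blocks is a function of `η` of the full blocks: the first differing blocks are cut at the
truncation point. Hence every `ξ_e`, and so `c_p`, of the prefixes `(v', w')` is a function of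
`c_p(v, w)`. Since `α'` is a multiple of `r_d` and `α - α' ≤ r_d`, the suffixes `v''`, `w''` form
the last block of resolution `d`, so `η_{d-1}(v'', w'')` is the last entry of `ξ_{d-1}(v, w)`.
-/

namespace List

@[simp] theorem toChunks_nil {α : Type*} (m : ℕ) : ([] : List α).toChunks m = [] := rfl

theorem toChunks_go_eq {α : Type*} {m : ℕ} (l acc₁ : List α) (acc₂ : List (List α))
    (h₁ : acc₁ ≠ []) (h₂ : acc₁.length ≤ m) :
    toChunks.go m l acc₁.toArray acc₂.toArray =
      acc₂ ++ (acc₁ ++ l.take (m - acc₁.length)) :: (l.drop (m - acc₁.length)).toChunks m := by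
  induction l generalizing acc₁ acc₂ with
  | nil => simp [toChunks.go, toChunks]
  | cons x xs ih =>
    obtain ⟨k, rfl⟩ : ∃ k, m = k + 1 := ⟨m - 1, by have := length_pos_iff.2 h₁; omega⟩
    have hx : (x :: xs).toChunks (k + 1) = (x :: xs.take k) :: (xs.drop k).toChunks (k + 1) := by
      change toChunks.go (k + 1) xs #[x] #[] = _
      simpa using ih [x] [] (cons_ne_nil x []) (by simp)
    rw [toChunks.go]
    by_cases h : acc₁.length = k + 1
    · simpa [h, hx] using ih [x] (acc₂ ++ [acc₁]) (cons_ne_nil x []) (by simp)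
    · obtain ⟨t, ht⟩ : ∃ t, k + 1 - acc₁.length = t + 1 := ⟨k - acc₁.length, by omega⟩
      simpa [h, ht, show k + 1 - (acc₁.length + 1) = t by omega] using
        ih (acc₁ ++ [x]) acc₂ (by simp) (by simp; omega)

theorem toChunks_of_ne_nil {α : Type*} {m : ℕ} (hm : 0 < m) {l : List α} (hl : l ≠ []) :
    l.toChunks m = l.take m :: (l.drop m).toChunks m := by
  obtain ⟨k, rfl⟩ : ∃ k, m = k + 1 := ⟨m - 1, by omega⟩
  obtain ⟨x, xs, rfl⟩ := exists_cons_of_ne_nil hl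
  change toChunks.go (k + 1) xs #[x] #[] = _
  simpa using toChunks_go_eq (m := k + 1) xs [x] [] (cons_ne_nil x []) (by simp)

end List

theorem eta_nil_left (r : ℕ) (w : List Bool) : eta r [] w = none := by
  simp [eta, blocksOf]

theorem eta_nil_right (r : ℕ) (v : List Bool) : eta r v [] = none := by
  simp [eta, blocksOf]

theorem eta_of_ne_nil {r : ℕ} (hr : 0 < r) {v w : List Bool} (hv : v ≠ []) (hw : w ≠ []) :
    eta r v w = if v.take r = w.take r
      then (eta r (v.drop r) (w.drop r)).map fun x => (x.1 + 1, x.2)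
      else some (0, s(v.take r, w.take r)) := by
  unfold eta blocksOf
  rw [List.toChunks_of_ne_nil hr hv, List.toChunks_of_ne_nil hr hw]
  split_ifs with h
  · simp [h, List.zipIdx_succ, List.find?_map, Option.map_map, Function.comp_def]
  · simp [h]

/-- If the first differing blocks `q` (the `i`-th ones) agree on their part inside the
length-`s` prefixes, then the prefixes agree altogether. -/
def truncEta (m s : ℕ) : Option (ℕ × Sym2 (List Bool)) → Option (ℕ × Sym2 (List Bool))
  | none => none
  | some (i, q) =>
    if (q.map (List.take (s - i * m))).IsDiag then none else some (i, q.map (List.take (s - i * m)))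

theorem truncEta_zero (m : ℕ) (o : Option (ℕ × Sym2 (List Bool))) : truncEta m 0 o = none := by
  rcases o with _ | ⟨i, q⟩
  · rfl
  · induction q using Sym2.ind
    simp [truncEta]

theorem truncEta_map_succ (m s : ℕ) (o : Option (ℕ × Sym2 (List Bool))) :
    truncEta m s (o.map fun x => (x.1 + 1, x.2)) =
      (truncEta m (s - m) o).map fun x => (x.1 + 1, x.2) := by
  rcases o with _ | ⟨i, q⟩
  · rfl
  · have hsub : s - (i + 1) * m = s - m - i * m := by rw [Nat.sub_sub, add_mul, one_mul, add_comm]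
    simp only [Option.map_some, truncEta, hsub]
    split_ifs <;> rfl

theorem eta_take {m : ℕ} (hm : 0 < m) (s : ℕ) (v w : List Bool) :
    eta m (v.take s) (w.take s) = truncEta m s (eta m v w) := by
  rcases Nat.eq_zero_or_pos s with rfl | hs
  · simp [eta_nil_left, truncEta_zero]
  rcases eq_or_ne v [] with rfl | hv
  · simp [eta_nil_left, truncEta]
  rcases eq_or_ne w [] with rfl | hw
  · simp [eta_nil_right, truncEta]
  have hvs : v.take s ≠ [] := by simp [hv, hs.ne']
  have hws : w.take s ≠ [] := by simp [hw, hs.ne']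
  rw [eta_of_ne_nil hm hvs hws, eta_of_ne_nil hm hv hw, List.take_take, List.take_take,
    List.drop_take, List.drop_take]
  by_cases hvw : v.take m = w.take m
  · have hvws : v.take (min m s) = w.take (min m s) := by
      rw [min_comm, ← List.take_take, hvw, List.take_take]
    rw [if_pos hvw, if_pos hvws, eta_take hm (s - m), truncEta_map_succ]
  · rw [if_neg hvw]
    simp only [truncEta, zero_mul, Nat.sub_zero, Sym2.map_mk, List.take_take,
      Sym2.mk_isDiag_iff, min_comm s m]
    split_ifs with hvws
    · have hsm : s < m := by
        by_contra! hms
        exact hvw (by simpa [min_eq_left hms] using hvws)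
      simp [Nat.sub_eq_zero_of_le hsm.le, eta_nil_left]
    · rfl
termination_by v.length
decreasing_by simp only [List.length_drop]; have := List.length_pos_iff.2 hv; omega

section Xi

variable {r : ℕ → ℕ} {e : ℕ}

theorem xi_nil_left (v : List Bool) : xi r e [] v = [] := by simp [xi, blocksOf]

theorem xi_nil_right (v : List Bool) : xi r e v [] = [] := by simp [xi, blocksOf]

theorem xi_of_ne_nil (hR : 0 < r (e + 1)) {v w : List Bool} (hv : v ≠ []) (hw : w ≠ []) :
    xi r e v w = eta (r e) (v.take (r (e + 1))) (w.take (r (e + 1))) ::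
      xi r e (v.drop (r (e + 1))) (w.drop (r (e + 1))) := by
  simp [xi, blocksOf, List.toChunks_of_ne_nil hR hv, List.toChunks_of_ne_nil hR hw]

theorem xi_of_length_le (hR : 0 < r (e + 1)) {v w : List Bool} (hv : v ≠ []) (hw : w ≠ [])
    (hvR : v.length ≤ r (e + 1)) (hwR : w.length ≤ r (e + 1)) :
    xi r e v w = [eta (r e) v w] := by
  rw [xi_of_ne_nil hR hv hw, List.take_of_length_le hvR, List.take_of_length_le hwR,
    List.drop_eq_nil_of_le hvR, xi_nil_left]

theorem xi_drop (hR : 0 < r (e + 1)) (q : ℕ) (v w : List Bool) :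
    xi r e (v.drop (r (e + 1) * q)) (w.drop (r (e + 1) * q)) = (xi r e v w).drop q := by
  induction q generalizing v w with
  | zero => simp
  | succ q ih =>
    rcases eq_or_ne v [] with rfl | hv
    · simp [xi_nil_left]
    rcases eq_or_ne w [] with rfl | hw
    · simp [xi_nil_right]
    rw [xi_of_ne_nil hR hv hw, List.drop_succ_cons, ← ih, List.drop_drop, List.drop_drop,
      Nat.mul_succ, add_comm]

def truncXi (R m : ℕ) : ℕ → List (Option (ℕ × Sym2 (List Bool))) →
    List (Option (ℕ × Sym2 (List Bool)))
  | _, [] => []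
  | k, o :: os => if k = 0 then [] else truncEta m k o :: truncXi R m (k - R) os

theorem truncXi_zero (R m : ℕ) (X : List (Option (ℕ × Sym2 (List Bool)))) :
    truncXi R m 0 X = [] := by
  cases X <;> simp [truncXi]

theorem xi_take (hR : 0 < r (e + 1)) (hm : 0 < r e) (k : ℕ) (v w : List Bool) :
    xi r e (v.take k) (w.take k) = truncXi (r (e + 1)) (r e) k (xi r e v w) := by
  rcases Nat.eq_zero_or_pos k with rfl | hk
  · simp [xi_nil_left, truncXi_zero]
  rcases eq_or_ne v [] with rfl | hv
  · simp [xi_nil_left, truncXi]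
  rcases eq_or_ne w [] with rfl | hw
  · simp [xi_nil_right, truncXi]
  have hvk : v.take k ≠ [] := by simp [hv, hk.ne']
  have hwk : w.take k ≠ [] := by simp [hw, hk.ne']
  rw [xi_of_ne_nil hR hvk hwk, xi_of_ne_nil hR hv hw, truncXi, if_neg hk.ne', ← eta_take hm,
    List.drop_take, List.drop_take, xi_take hR hm (k - r (e + 1))]
  simp only [List.take_take, min_comm]
termination_by v.length
decreasing_by simp only [List.length_drop]; have := List.length_pos_iff.2 hv; omega

end Xi

def truncColor (r : ℕ → ℕ) (p k : ℕ) (X : EGColor) : EGColor :=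
  X.mapIdx fun j => truncXi (r (p - j + 1)) (r (p - j)) k

theorem cColor_take {r : ℕ → ℕ} {p : ℕ} (hr : ∀ e ≤ p + 1, 0 < r e) (k : ℕ)
    (v w : List Bool) :
    cColor r p (v.take k) (w.take k) = truncColor r p k (cColor r p v w) := by
  refine List.ext_getElem (by simp [cColor, truncColor]) fun j hj _ => ?_
  simp only [cColor, List.length_map, List.length_range] at hj
  simp only [cColor, truncColor, List.getElem_map, List.getElem_mapIdx, List.getElem_range]
  exact xi_take (hr _ (by omega)) (hr _ (by omega)) k v w

theorem xi_eq_getD_cColor {r : ℕ → ℕ} {p e : ℕ} (he : e ≤ p) (v w : List Bool) :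
    xi r e v w = (cColor r p v w).getD (p - e) [] := by
  simp [cColor, List.getD_eq_getElem?_getD, show p - e < p + 1 by omega,
    Nat.sub_sub_self he]

theorem alphaD_lt {R α : ℕ} (hα : 0 < α) : alphaD R α < α := by
  have := Nat.div_add_mod (α - 1) R
  unfold alphaD
  omega

theorem le_alphaD_add {R α : ℕ} (hR : 0 < R) : α ≤ alphaD R α + R := by
  have := Nat.div_add_mod (α - 1) R
  have := Nat.mod_lt (α - 1) hR
  unfold alphaD
  omega

theorem eta_drop_alphaD {r : ℕ → ℕ} {e α : ℕ} (hR : 0 < r (e + 1)) (hα : 0 < α)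
    {v w : List Bool} (hv : v.length = α) (hw : w.length = α) :
    eta (r e) (v.drop (alphaD (r (e + 1)) α)) (w.drop (alphaD (r (e + 1)) α)) =
      (xi r e v w).getLastD none := by
  have hlt := alphaD_lt (R := r (e + 1)) hα
  have hle := le_alphaD_add (α := α) hR
  obtain ⟨q, hq⟩ : ∃ q, alphaD (r (e + 1)) α = r (e + 1) * q := ⟨_, rfl⟩
  rw [hq] at hlt hle ⊢
  have hv' : (v.drop (r (e + 1) * q)).length = α - r (e + 1) * q := by rw [List.length_drop, hv]
  have hw' : (w.drop (r (e + 1) * q)).length = α - r (e + 1) * q := by rw [List.length_drop, hw]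
  have hlast : (xi r e v w).drop q =
      [eta (r e) (v.drop (r (e + 1) * q)) (w.drop (r (e + 1) * q))] := by
    rw [← xi_drop hR]
    exact xi_of_length_le hR (List.ne_nil_of_length_pos (by omega))
      (List.ne_nil_of_length_pos (by omega)) (by omega) (by omega)
  rw [← List.take_append_drop q (xi r e v w), hlast]
  simp [List.getLastD_eq_getLast?]

theorem stmt8_general (d p α : ℕ) (hd : 1 ≤ d) (hdp : d ≤ p + 1) (hα : 1 ≤ α)
    (r : ℕ → ℕ)
    (hrpos : ∀ e ≤ p + 1, 0 < r e)
    (v w x y : List Bool) (hv : v.length = α) (hw : w.length = α)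
    (hx : x.length = α) (hy : y.length = α)
    (h : cColor r p v w = cColor r p x y) :
    (cColor r p (v.take (alphaD (r d) α)) (w.take (alphaD (r d) α)),
      eta (r (d - 1)) (v.drop (alphaD (r d) α)) (w.drop (alphaD (r d) α))) =
    (cColor r p (x.take (alphaD (r d) α)) (y.take (alphaD (r d) α)),
      eta (r (d - 1)) (x.drop (alphaD (r d) α)) (y.drop (alphaD (r d) α))) := by
  obtain ⟨e, rfl⟩ : ∃ e, d = e + 1 := ⟨d - 1, by omega⟩
  have hR := hrpos (e + 1) hdp
  rw [Nat.add_sub_cancel, cColor_take hrpos, cColor_take hrpos, eta_drop_alphaD hR hα hv hw,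
    eta_drop_alphaD hR hα hx hy, xi_eq_getD_cColor (p := p) (by omega),
    xi_eq_getD_cColor (p := p) (by omega), h]

/-- **Lemma 4.3.** Let `1 ≤ d ≤ p+1` and let `α' = alphaD (r d) α` be the largest
multiple of `r d` strictly less than `α`. Then `c_p` refines the function
`γ_d(v, w) = (c_p(v', w'), η_{d−1}(v'', w''))`, where `v = (v', v'')` and `w = (w', w'')`
are split at position `α'`. -/
theorem stmt8 (d p α : ℕ) (hd : 1 ≤ d) (hdp : d ≤ p + 1) (hα : 1 ≤ α)
    (r : ℕ → ℕ) (hr0 : r 0 = 1)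
    (hrpos : ∀ e ≤ p + 1, 0 < r e) (hrdvd : ∀ e < p + 1, r e ∣ r (e + 1))
    (v w x y : List Bool) (hv : v.length = α) (hw : w.length = α)
    (hx : x.length = α) (hy : y.length = α)
    (h : cColor r p v w = cColor r p x y) :
    (cColor r p (v.take (alphaD (r d) α)) (w.take (alphaD (r d) α)),
      eta (r (d - 1)) (v.drop (alphaD (r d) α)) (w.drop (alphaD (r d) α))) =
    (cColor r p (x.take (alphaD (r d) α)) (y.take (alphaD (r d) α)),
      eta (r (d - 1)) (x.drop (alphaD (r d) α)) (y.drop (alphaD (r d) α))) :=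
  stmt8_general d p α hd hdp hα r hrpos v w x y hv hw hx hy h
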